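/- Let n ≥ 1, s ∈ (0,1), and let K be a kernel with λ|z|^{−n−2s} ≤ K(z) ≤ Λ|z|^{−n−2s}. Fix β > 0 and for A > 0 set U_A(x) := A (1+|x|²)^{−β}. Then there exists a constant C = C(n, s, Λ, β) > 0 such that for every A > 0 and every x ∈ ℝⁿ, the near-field integral satisfies |∫_{|z|≤1} (U_A(x+z) − U_A(x) − ∇U_A(x)·z) K(z) dz| ≤ C A (1+|x|²)^{−β−1}. -/

import Mathlib

open MeasureTheory
open scoped RealInnerProductSpace

noncomputable section

/-- A symmetric measurable kernel with two-sided fractional bounds of order `2s`. -/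
def IsKernel (n : ℕ) (s lam Lam : ℝ) (K : EuclideanSpace ℝ (Fin n) → ℝ) : Prop :=
  Measurable K ∧
  (∀ z : EuclideanSpace ℝ (Fin n), z ≠ 0 → K (-z) = K z) ∧
  (∀ z : EuclideanSpace ℝ (Fin n), z ≠ 0 →
    lam * ‖z‖ ^ (-(n : ℝ) - 2 * s) ≤ K z ∧ K z ≤ Lam * ‖z‖ ^ (-(n : ℝ) - 2 * s))

/-- The power barrier `U_A(x) = A (1+|x|²)^{−β}`. -/
def powerBarrier (n : ℕ) (β A : ℝ) (x : EuclideanSpace ℝ (Fin n)) : ℝ :=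
  A * (1 + ‖x‖ ^ 2) ^ (-β)

set_option maxHeartbeats 1000000 in
/-- Second-order Taylor estimate for `(1+|x|²)^{-β}`. -/
lemma barrier_taylor_bound {E : Type*} [NormedAddCommGroup E] [InnerProductSpace ℝ E]
    (β : ℝ) (hβ : 0 < β) (x z : E) (hz : ‖z‖ ≤ 1) :
    |(1+‖x+z‖^2)^(-β) - (1+‖x‖^2)^(-β) + 2*β*((1+‖x‖^2)^(-(β+1))*⟪x,z⟫)|
      ≤ (4*β*(β+1)+2*β) * 3^(β+1) * (1+‖x‖^2)^(-(β+1)) * ‖z‖^2 := by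
  set a : ℝ := ‖x‖^2 with ha
  set b : ℝ := ⟪x,z⟫ with hb
  set c : ℝ := ‖z‖^2 with hc
  have ha0 : 0 ≤ a := sq_nonneg _
  have hc0 : 0 ≤ c := sq_nonneg _
  have hc1 : c ≤ 1 := by rw [hc]; nlinarith [norm_nonneg z]
  set q : ℝ → ℝ := fun t => 1 + a + 2*b*t + c*t^2 with hqdef
  have hq : ∀ t : ℝ, q t = 1 + ‖x + t•z‖^2 := by
    intro t
    rw [hqdef]
    simp only [norm_add_sq_real, real_inner_smul_right, norm_smul, Real.norm_eq_abs,
      mul_pow, sq_abs]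
    ring
  have hq1 : ∀ t : ℝ, 1 ≤ q t := by
    intro t; rw [hq]; nlinarith [sq_nonneg ‖x + t•z‖]
  have hq0 : ∀ t : ℝ, 0 < q t := fun t => lt_of_lt_of_le one_pos (hq1 t)
  have hq' : ∀ t : ℝ, HasDerivAt q (2*b + 2*c*t) t := by
    intro t
    exact ((((hasDerivAt_const t (1+a)).add ((hasDerivAt_id t).const_mul (2*b))).add
      ((hasDerivAt_pow 2 t).const_mul c))).congr_deriv (by push_cast; ring)
  set φ : ℝ → ℝ := fun t => (q t)^(-β) with hφdef
  set φ' : ℝ → ℝ := fun t => (-β) * ((q t)^(-(β+1)) * (2*b+2*c*t)) with hφ'def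
  set φ'' : ℝ → ℝ := fun t => (-β) * ( ((-(β+1)) * (q t)^(-(β+2)) * (2*b+2*c*t)) * (2*b+2*c*t)
        + (q t)^(-(β+1)) * (2*c) ) with hφ''def
  have hφ' : ∀ t : ℝ, HasDerivAt φ (φ' t) t := by
    intro t
    have h := (Real.hasDerivAt_rpow_const (x := q t) (p := -β) (Or.inl (hq0 t).ne')).comp t (hq' t)
    exact h.congr_deriv (by rw [show -β - 1 = -(β+1) by ring]; ring)
  have hφ'' : ∀ t : ℝ, HasDerivAt φ' (φ'' t) t := by
    intro t
    have hg : HasDerivAt (fun t => (q t)^(-(β+1))) ((-(β+1)) * (q t)^(-(β+2)) * (2*b+2*c*t)) t := by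
      have h := (Real.hasDerivAt_rpow_const (x := q t) (p := -(β+1)) (Or.inl (hq0 t).ne')).comp t (hq' t)
      exact h.congr_deriv (by rw [show -(β+1) - 1 = -(β+2) by ring])
    have hh : HasDerivAt (fun t : ℝ => 2*b+2*c*t) (2*c) t := by
      exact (((hasDerivAt_id t).const_mul (2*c)).const_add (2*b)).congr_deriv (by ring)
    exact ((hg.mul hh).const_mul (-β)).congr_deriv (by ring)
  -- second derivative bound
  set M : ℝ := (4*β*(β+1)+2*β) * 3^(β+1) * (1+a)^(-(β+1)) * c with hM
  have hbound : ∀ t ∈ Set.Icc (0:ℝ) 1, |φ'' t| ≤ M := by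
    intro t ht
    have hqt := hq0 t
    have hinner : b + c*t = ⟪x + t•z, z⟫ := by
      rw [hb, hc, inner_add_left, real_inner_smul_left, real_inner_self_eq_norm_sq]; ring
    have hCS : (2*b+2*c*t)^2 ≤ 4 * (q t) * c := by
      have h1 : ⟪x + t•z, z⟫ * ⟪x + t•z, z⟫ ≤ ‖x + t•z‖^2 * c := by
        have := real_inner_mul_inner_self_le (x + t•z) z
        simpa [real_inner_self_eq_norm_sq, hc] using this
      have h2 : ‖x + t•z‖^2 ≤ q t := by rw [hq t]; linarith
      have h4 : (2*b+2*c*t)^2 = 4 * ((b + c*t) * (b + c*t)) := by ring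
      rw [h4, hinner]
      nlinarith [hc0]
    have h3 : 1 + a ≤ 3 * q t := by
      have ht0 := ht.1; have ht1 := ht.2
      have hxz : ‖x‖ ≤ ‖x + t•z‖ + 1 := by
        have h6 := norm_sub_norm_le x (x + t•z)
        have h4 : ‖x - (x + t•z)‖ = ‖t•z‖ := by rw [show x - (x + t•z) = -(t•z) by abel, norm_neg]
        have h5 : ‖t•z‖ ≤ 1 := by
          rw [norm_smul, Real.norm_eq_abs, abs_of_nonneg ht0]
          nlinarith [norm_nonneg z]
        nlinarith [norm_nonneg (x + t•z)]
      have haw : a ≤ (‖x + t•z‖ + 1)^2 := by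
        rw [ha]; exact pow_le_pow_left₀ (norm_nonneg x) hxz 2
      rw [hq t]
      nlinarith [haw, sq_nonneg (‖x + t•z‖ - 1)]
    have hqa : (q t)^(-(β+1)) ≤ 3^(β+1) * (1+a)^(-(β+1)) := by
      have hpos : (0:ℝ) < (1+a)/3 := by linarith
      have hle : (1+a)/3 ≤ q t := by
        rw [div_le_iff₀ (by norm_num : (0:ℝ) < 3)]; linarith
      have h := Real.rpow_le_rpow_of_nonpos hpos hle (by linarith : -(β+1) ≤ 0)
      calc (q t)^(-(β+1)) ≤ ((1+a)/3)^(-(β+1)) := h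
        _ = 3^(β+1) * (1+a)^(-(β+1)) := by
            rw [Real.div_rpow (by linarith) (by norm_num), Real.rpow_neg (by linarith),
              Real.rpow_neg (by norm_num : (0:ℝ) ≤ 3), div_eq_mul_inv, inv_inv]
            ring
    have hq2 : (q t)^(-(β+2)) * (2*b+2*c*t)^2 ≤ 4 * c * (q t)^(-(β+1)) := by
      have hp2 : (0:ℝ) < (q t)^(-(β+2)) := Real.rpow_pos_of_pos hqt _
      calc (q t)^(-(β+2)) * (2*b+2*c*t)^2 ≤ (q t)^(-(β+2)) * (4 * (q t) * c) :=
            mul_le_mul_of_nonneg_left hCS hp2.le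
        _ = 4 * c * ((q t)^(-(β+2)) * (q t)^(1:ℝ)) := by rw [Real.rpow_one]; ring
        _ = 4 * c * (q t)^(-(β+1)) := by
            rw [← Real.rpow_add hqt]; ring_nf
    have hqp1 : (0:ℝ) < (q t)^(-(β+1)) := Real.rpow_pos_of_pos hqt _
    have habs : |φ'' t| ≤ (4*β*(β+1)+2*β) * c * (q t)^(-(β+1)) := by
      rw [hφ''def]
      have e1 : |((-(β+1)) * (q t)^(-(β+2)) * (2*b+2*c*t)) * (2*b+2*c*t)|
          = (β+1) * ((q t)^(-(β+2)) * (2*b+2*c*t)^2) := by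
        rw [show ((-(β+1)) * (q t)^(-(β+2)) * (2*b+2*c*t)) * (2*b+2*c*t)
            = -((β+1) * ((q t)^(-(β+2)) * (2*b+2*c*t)^2)) by ring, abs_neg,
          abs_of_nonneg (mul_nonneg (by linarith)
            (mul_nonneg (Real.rpow_pos_of_pos hqt _).le (sq_nonneg _)))]
      have e2 : |(q t)^(-(β+1)) * (2*c)| = (q t)^(-(β+1)) * (2*c) := by
        rw [abs_of_nonneg (mul_nonneg hqp1.le (by linarith))]
      have htri := abs_add_le (((-(β+1)) * (q t)^(-(β+2)) * (2*b+2*c*t)) * (2*b+2*c*t))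
        ((q t)^(-(β+1)) * (2*c))
      rw [e1, e2] at htri
      have h1 : |(-β) * ( ((-(β+1)) * (q t)^(-(β+2)) * (2*b+2*c*t)) * (2*b+2*c*t)
          + (q t)^(-(β+1)) * (2*c) )|
          ≤ β * ((β+1) * ((q t)^(-(β+2)) * (2*b+2*c*t)^2) + (q t)^(-(β+1)) * (2*c)) := by
        rw [abs_mul, abs_neg, abs_of_pos hβ]
        exact mul_le_mul_of_nonneg_left htri hβ.le
      refine h1.trans ?_
      have h2 : (β+1) * ((q t)^(-(β+2)) * (2*b+2*c*t)^2) ≤ (β+1) * (4 * c * (q t)^(-(β+1))) :=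
        mul_le_mul_of_nonneg_left hq2 (by linarith)
      nlinarith [hqp1]
    refine habs.trans ?_
    rw [hM]
    have h5 : (4*β*(β+1)+2*β) * c * (q t)^(-(β+1))
        ≤ (4*β*(β+1)+2*β) * c * (3^(β+1) * (1+a)^(-(β+1))) := by
      apply mul_le_mul_of_nonneg_left hqa
      positivity
    linarith [h5]
  -- MVT step 1
  have hM0 : 0 ≤ M := by rw [hM]; positivity
  have step1 : ∀ t ∈ Set.Icc (0:ℝ) 1, |φ' t - φ' 0| ≤ M := by
    intro t ht
    have h := (convex_Icc (0:ℝ) 1).norm_image_sub_le_of_norm_hasDerivWithin_le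
      (f := φ') (f' := φ'') (fun u _ => (hφ'' u).hasDerivWithinAt)
      (fun u hu => by simpa [Real.norm_eq_abs] using hbound u hu)
      (Set.left_mem_Icc.2 zero_le_one) ht
    rw [Real.norm_eq_abs] at h
    have ht1 : ‖t - 0‖ ≤ 1 := by
      rw [sub_zero, Real.norm_eq_abs, abs_of_nonneg ht.1]; exact ht.2
    nlinarith [h, ht1, hM0]
  -- MVT step 2
  set w : ℝ → ℝ := fun t => φ t - t * φ' 0 with hw
  have hw' : ∀ t : ℝ, HasDerivAt w (φ' t - φ' 0) t := by
    intro t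
    exact ((hφ' t).sub (((hasDerivAt_id t).mul_const (φ' 0)).congr_deriv (by ring)))
  have step2 : |w 1 - w 0| ≤ M := by
    have h := (convex_Icc (0:ℝ) 1).norm_image_sub_le_of_norm_hasDerivWithin_le
      (f := w) (f' := fun t => φ' t - φ' 0) (fun u _ => (hw' u).hasDerivWithinAt)
      (fun u hu => by simpa [Real.norm_eq_abs] using step1 u hu)
      (Set.left_mem_Icc.2 zero_le_one) (Set.right_mem_Icc.2 zero_le_one)
    rw [Real.norm_eq_abs] at h
    simpa using h
  -- conclusion
  have hq0' : q 0 = 1 + a := by rw [hqdef]; ring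
  have hq1' : q 1 = 1 + ‖x + z‖^2 := by rw [hq 1, one_smul]
  have hφ0 : φ 0 = (1+a)^(-β) := by rw [hφdef]; simp only [hq0']
  have hφ1 : φ 1 = (1+‖x+z‖^2)^(-β) := by rw [hφdef]; simp only [hq1']
  have hφ'0 : φ' 0 = -(2*β*((1+a)^(-(β+1)) * b)) := by
    rw [hφ'def]; simp only [hq0', mul_zero, add_zero]; ring
  have hfinal : w 1 - w 0 = (1+‖x+z‖^2)^(-β) - (1+a)^(-β) + 2*β*((1+a)^(-(β+1))*b) := by
    rw [hw]; simp only [one_mul, zero_mul, sub_zero]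
    rw [hφ0, hφ1, hφ'0]; ring
  rw [← hfinal]
  exact step2.trans (by rw [hM])

open Metric Set in
/-- Integrability of negative powers of the norm on the unit ball, above the critical power. -/
lemma integrableOn_rpow_norm_closedBall (n : ℕ) (hn : 1 ≤ n) (p : ℝ) (hp : -(n:ℝ) < p) :
    IntegrableOn (fun z : EuclideanSpace ℝ (Fin n) => ‖z‖ ^ p)
      (Metric.closedBall (0 : EuclideanSpace ℝ (Fin n)) 1) := by
  haveI : Nonempty (Fin n) := Fin.pos_iff_nonempty.mp hn
  haveI : Nontrivial (EuclideanSpace ℝ (Fin n)) := by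
    exact inferInstance
  classical
  have hu0 : ∀ k : ℕ, (0:ℝ) < (2:ℝ)⁻¹ ^ k := fun k => pow_pos (by norm_num) k
  set S : ℕ → Set (EuclideanSpace ℝ (Fin n)) := fun k =>
    closedBall 0 ((2:ℝ)⁻¹ ^ k) \ closedBall 0 ((2:ℝ)⁻¹ ^ (k+1)) with hS
  have hcover : closedBall (0:EuclideanSpace ℝ (Fin n)) 1 ⊆ {0} ∪ ⋃ k, S k := by
    intro z hz
    rcases eq_or_ne z 0 with rfl | hz0
    · exact Or.inl rfl
    refine Or.inr ?_
    have hzn : 0 < ‖z‖ := norm_pos_iff.2 hz0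
    have hex : ∃ m : ℕ, (2:ℝ)⁻¹ ^ m < ‖z‖ := exists_pow_lt_of_lt_one hzn (by norm_num)
    have hm : (2:ℝ)⁻¹ ^ (Nat.find hex) < ‖z‖ := Nat.find_spec hex
    have hz1 : ‖z‖ ≤ 1 := by simpa using hz
    have hm0 : 0 < Nat.find hex := by
      rcases Nat.eq_zero_or_pos (Nat.find hex) with h0 | h0
      · rw [h0, pow_zero] at hm; linarith
      · exact h0
    refine mem_iUnion.2 ⟨Nat.find hex - 1, ?_, ?_⟩
    · simp only [mem_closedBall, dist_zero_right]
      by_contra hcon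
      push_neg at hcon
      exact Nat.find_min hex (Nat.sub_lt hm0 one_pos) hcon
    · simp only [mem_closedBall, dist_zero_right, not_le]
      rwa [Nat.sub_add_cancel hm0]
  have hVfin : volume (closedBall (0:EuclideanSpace ℝ (Fin n)) 1) < ⊤ := measure_closedBall_lt_top
  have hSmeas : ∀ k, volume (S k) ≤ ENNReal.ofReal (((2:ℝ)⁻¹ ^ k)^n)
      * volume (closedBall (0:EuclideanSpace ℝ (Fin n)) 1) := by
    intro k
    calc volume (S k) ≤ volume (closedBall (0:EuclideanSpace ℝ (Fin n)) ((2:ℝ)⁻¹ ^ k)) :=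
          measure_mono diff_subset
      _ = _ := by
          rw [Measure.addHaar_closedBall _ _ (hu0 k).le, finrank_euclideanSpace_fin,
            Measure.addHaar_closedBall_eq_addHaar_ball]
  have hbnd : ∀ k : ℕ, ∀ z ∈ S k, ‖z‖ ^ p ≤ 2^|p| * ((2:ℝ)⁻¹ ^ k) ^ p := by
    intro k z hzk
    obtain ⟨hz1, hz2⟩ := hzk
    simp only [mem_closedBall, dist_zero_right, not_le] at hz1 hz2
    have huk2 : ((2:ℝ)⁻¹ ^ (k+1)) = (2:ℝ)⁻¹ ^ k / 2 := by rw [pow_succ]; ring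
    rcases le_or_gt 0 p with hp0 | hp0
    · have h1 : ‖z‖ ^ p ≤ ((2:ℝ)⁻¹ ^ k) ^ p := Real.rpow_le_rpow (norm_nonneg z) hz1 hp0
      have h2 : (1:ℝ) ≤ 2^|p| := Real.one_le_rpow (by norm_num) (abs_nonneg p)
      nlinarith [Real.rpow_nonneg (hu0 k).le p]
    · have h1 : ‖z‖ ^ p ≤ ((2:ℝ)⁻¹ ^ (k+1)) ^ p :=
        Real.rpow_le_rpow_of_nonpos (by positivity) hz2.le hp0.le
      have h2 : ((2:ℝ)⁻¹ ^ (k+1) : ℝ) ^ p = ((2:ℝ)⁻¹ ^ k)^p * (2:ℝ)^(-p) := by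
        rw [huk2, Real.div_rpow (hu0 k).le (by norm_num), Real.rpow_neg (by norm_num),
          div_eq_mul_inv]
      rw [abs_of_neg hp0]
      rw [h2] at h1; linarith [h1]
  have hgeom : ∀ k : ℕ, (((2:ℝ)⁻¹ ^ k) ^ p * (((2:ℝ)⁻¹ ^ k : ℝ)) ^ n : ℝ)
      = ((2:ℝ)⁻¹ ^ (p + n) : ℝ) ^ k := by
    intro k
    induction k with
    | zero => simp
    | succ k ih =>
      have hpow : ((2:ℝ)⁻¹ ^ (k+1) : ℝ) = (2:ℝ)⁻¹ ^ k * 2⁻¹ := by rw [pow_succ]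
      have hsplit : ((2:ℝ)⁻¹ ^ (p + (n:ℝ)) : ℝ) = (2:ℝ)⁻¹ ^ p * ((2:ℝ)⁻¹)^(n:ℕ) := by
        rw [Real.rpow_add (by norm_num : (0:ℝ) < 2⁻¹), Real.rpow_natCast]
      rw [hpow, Real.mul_rpow (by positivity) (by norm_num), mul_pow, pow_succ,
        hsplit]
      rw [hsplit] at ih
      linear_combination ((2:ℝ)⁻¹ ^ p * (2:ℝ)⁻¹ ^ n) * ih
  have key : ∀ k : ℕ, (∫⁻ z in S k, ENNReal.ofReal (‖z‖ ^ p)) ≤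
      ENNReal.ofReal (2^|p|) * volume (closedBall (0:EuclideanSpace ℝ (Fin n)) 1)
        * (ENNReal.ofReal ((2:ℝ)⁻¹ ^ (p + n)))^k := by
    intro k
    have h1 : (∫⁻ z in S k, ENNReal.ofReal (‖z‖ ^ p))
        ≤ (∫⁻ _ in S k, ENNReal.ofReal (2^|p| * ((2:ℝ)⁻¹ ^ k) ^ p)) := by
      apply setLIntegral_mono (by fun_prop)
      intro z hz
      exact ENNReal.ofReal_le_ofReal (hbnd k z hz)
    rw [setLIntegral_const] at h1
    refine h1.trans ?_
    calc ENNReal.ofReal (2^|p| * ((2:ℝ)⁻¹ ^ k)^p) * volume (S k)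
        ≤ ENNReal.ofReal (2^|p| * ((2:ℝ)⁻¹ ^ k)^p) * (ENNReal.ofReal (((2:ℝ)⁻¹ ^ k)^n)
            * volume (closedBall (0:EuclideanSpace ℝ (Fin n)) 1)) :=
          mul_le_mul_right (hSmeas k) _
      _ = ENNReal.ofReal (2^|p|) * volume (closedBall (0:EuclideanSpace ℝ (Fin n)) 1)
            * (ENNReal.ofReal (((2:ℝ)⁻¹ ^ k)^p * ((2:ℝ)⁻¹ ^ k)^n)) := by
          rw [ENNReal.ofReal_mul (by positivity), ENNReal.ofReal_mul (by positivity)]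
          ring
      _ = _ := by
          rw [hgeom k, ← ENNReal.ofReal_pow (by positivity)]
  -- total lintegral bound
  have hr1 : ENNReal.ofReal ((2:ℝ)⁻¹ ^ (p + n)) < 1 := by
    rw [ENNReal.ofReal_lt_one]
    apply Real.rpow_lt_one (by norm_num) (by norm_num)
    linarith
  have htotal : (∫⁻ z in closedBall (0:EuclideanSpace ℝ (Fin n)) 1, ENNReal.ofReal (‖z‖ ^ p)) < ⊤ := by
    have h0 : (∫⁻ z in ({0} : Set (EuclideanSpace ℝ (Fin n))), ENNReal.ofReal (‖z‖ ^ p)) = 0 := by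
      rw [Measure.restrict_eq_zero.mpr (measure_singleton _), lintegral_zero_measure]
    have hmono : (∫⁻ z in closedBall (0:EuclideanSpace ℝ (Fin n)) 1, ENNReal.ofReal (‖z‖ ^ p))
        ≤ ∫⁻ z in ({0} : Set (EuclideanSpace ℝ (Fin n))) ∪ ⋃ k, S k, ENNReal.ofReal (‖z‖ ^ p) :=
      lintegral_mono_set hcover
    refine hmono.trans_lt ?_
    refine (lintegral_union_le _ _ _).trans_lt ?_
    rw [h0, zero_add]
    refine (lintegral_iUnion_le _ _).trans_lt ?_
    have hsum : ∑' k : ℕ, (∫⁻ z in S k, ENNReal.ofReal (‖z‖ ^ p))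
        ≤ ∑' k : ℕ, ENNReal.ofReal (2^|p|) * volume (closedBall (0:EuclideanSpace ℝ (Fin n)) 1)
          * (ENNReal.ofReal ((2:ℝ)⁻¹ ^ (p + n)))^k := ENNReal.tsum_le_tsum key
    refine hsum.trans_lt ?_
    rw [ENNReal.tsum_mul_left, ENNReal.tsum_geometric]
    apply ENNReal.mul_lt_top
    · exact ENNReal.mul_lt_top ENNReal.ofReal_lt_top hVfin
    · rw [ENNReal.inv_lt_top]
      exact tsub_pos_of_lt hr1
  refine ⟨(measurable_norm.pow_const p).aestronglyMeasurable, ?_⟩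
  rw [hasFiniteIntegral_iff_norm]
  refine lt_of_le_of_lt (lintegral_mono (fun z => ?_)) htotal
  exact le_of_eq (by rw [Real.norm_eq_abs, abs_of_nonneg (Real.rpow_nonneg (norm_nonneg _) _)])

/-- The gradient of the power barrier. -/
lemma hasGradientAt_powerBarrier (n : ℕ) (β A : ℝ) (x : EuclideanSpace ℝ (Fin n)) :
    HasGradientAt (powerBarrier n β A)
      ((A * (-2*β) * (1+‖x‖^2)^(-(β+1))) • x) x := by
  have hpos : (0:ℝ) < 1 + ‖x‖^2 := by positivity
  have h1 : HasFDerivAt (fun y : EuclideanSpace ℝ (Fin n) => 1 + ‖y‖^2)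
      (2 • (innerSL ℝ x)) x := by
    simpa using ((hasStrictFDerivAt_norm_sq x).hasFDerivAt.const_add 1)
  have h2 : HasDerivAt (fun u : ℝ => u ^ (-β)) (-β * (1+‖x‖^2)^(-β-1)) (1+‖x‖^2) :=
    Real.hasDerivAt_rpow_const (Or.inl hpos.ne')
  have h3 := (h2.comp_hasFDerivAt x h1).const_mul A
  have h4 : HasFDerivAt (powerBarrier n β A)
      (A • ((-β * (1+‖x‖^2)^(-β-1)) • (2 • (innerSL ℝ x)))) x := h3
  rw [hasGradientAt_iff_hasFDerivAt]
  refine h4.congr_fderiv ?_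
  ext y
  simp only [InnerProductSpace.toDual_apply_apply, ContinuousLinearMap.smul_apply,
    innerSL_apply_apply, smul_eq_mul, real_inner_smul_left]
  rw [show -(β+1) = -β-1 by ring]
  ring

/-- **Near-field barrier estimate.**  There is `C = C(n,s,Λ,β) > 0` such that for
every `A > 0` and `x`, the near-field part of `L U_A(x)` is integrable on the
unit ball and bounded by `C A (1+|x|²)^{−β−1}`. -/
theorem barrier_near_field_estimate
    (n : ℕ) (hn : 1 ≤ n) (s lam Lam β : ℝ)
    (hs0 : 0 < s) (hs1 : s < 1) (hlam : 0 < lam) (hlamLam : lam ≤ Lam)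
    (hβ : 0 < β)
    (K : EuclideanSpace ℝ (Fin n) → ℝ) (hK : IsKernel n s lam Lam K) :
    ∃ C : ℝ, 0 < C ∧ ∀ A : ℝ, 0 < A → ∀ x : EuclideanSpace ℝ (Fin n),
      IntegrableOn (fun z : EuclideanSpace ℝ (Fin n) =>
          (powerBarrier n β A (x + z) - powerBarrier n β A x
            - ⟪gradient (powerBarrier n β A) x, z⟫) * K z)
        (Metric.closedBall (0 : EuclideanSpace ℝ (Fin n)) 1) ∧
      |∫ z in Metric.closedBall (0 : EuclideanSpace ℝ (Fin n)) 1,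
          (powerBarrier n β A (x + z) - powerBarrier n β A x
            - ⟪gradient (powerBarrier n β A) x, z⟫) * K z|
        ≤ C * A * (1 + ‖x‖ ^ 2) ^ (-β - 1) := by
  obtain ⟨hKmeas, _, hKbnd⟩ := hK
  set p : ℝ := 2 - (n:ℝ) - 2*s with hpdef
  have hp : -(n:ℝ) < p := by rw [hpdef]; linarith
  have hLam : 0 < Lam := lt_of_lt_of_le hlam hlamLam
  set M₀ : ℝ := (4*β*(β+1)+2*β) * 3^(β+1) with hM₀
  have hM₀pos : 0 < M₀ := by rw [hM₀]; positivity
  have hInt : IntegrableOn (fun z : EuclideanSpace ℝ (Fin n) => ‖z‖ ^ p)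
      (Metric.closedBall (0 : EuclideanSpace ℝ (Fin n)) 1) :=
    integrableOn_rpow_norm_closedBall n hn p hp
  set I : ℝ := ∫ z in Metric.closedBall (0 : EuclideanSpace ℝ (Fin n)) 1, ‖z‖ ^ p with hI
  have hI0 : 0 ≤ I := by
    rw [hI]
    exact setIntegral_nonneg measurableSet_closedBall
      (fun z _ => Real.rpow_nonneg (norm_nonneg z) p)
  refine ⟨M₀ * Lam * I + 1, by positivity, ?_⟩
  intro A hA x
  have hpos : (0:ℝ) < 1 + ‖x‖^2 := by positivity
  set P : ℝ := (1 + ‖x‖^2) ^ (-(β+1)) with hP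
  have hPpos : 0 < P := Real.rpow_pos_of_pos hpos _
  -- gradient computation
  have hgrad : gradient (powerBarrier n β A) x = (A * (-2*β) * P) • x :=
    (hasGradientAt_powerBarrier n β A x).gradient
  have hinner : ∀ z : EuclideanSpace ℝ (Fin n),
      ⟪gradient (powerBarrier n β A) x, z⟫ = A * (-2*β) * P * ⟪x, z⟫ := by
    intro z; rw [hgrad, real_inner_smul_left]
  -- pointwise bound
  have hptwise : ∀ z : EuclideanSpace ℝ (Fin n), z ≠ 0 → ‖z‖ ≤ 1 →
      ‖(powerBarrier n β A (x + z) - powerBarrier n β A x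
        - ⟪gradient (powerBarrier n β A) x, z⟫) * K z‖
      ≤ A * M₀ * Lam * P * ‖z‖ ^ p := by
    intro z hz0 hz1
    have hzn : 0 < ‖z‖ := norm_pos_iff.2 hz0
    have hnum : powerBarrier n β A (x + z) - powerBarrier n β A x
        - ⟪gradient (powerBarrier n β A) x, z⟫
        = A * ((1+‖x+z‖^2)^(-β) - (1+‖x‖^2)^(-β) + 2*β*((1+‖x‖^2)^(-(β+1))*⟪x,z⟫)) := by
      rw [hinner z, powerBarrier, powerBarrier, hP]
      ring
    have htay := barrier_taylor_bound β hβ x z hz1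
    have hnum_bnd : |powerBarrier n β A (x + z) - powerBarrier n β A x
        - ⟪gradient (powerBarrier n β A) x, z⟫| ≤ A * (M₀ * P * ‖z‖^2) := by
      rw [hnum, abs_mul, abs_of_pos hA]
      apply mul_le_mul_of_nonneg_left _ hA.le
      refine htay.trans (le_of_eq ?_)
      rw [hM₀, hP]
    have hKpos : 0 < K z := lt_of_lt_of_le (by positivity) (hKbnd z hz0).1
    have hKabs : |K z| ≤ Lam * ‖z‖ ^ (-(n:ℝ) - 2*s) := by
      rw [abs_of_pos hKpos]; exact (hKbnd z hz0).2
    rw [norm_mul, Real.norm_eq_abs, Real.norm_eq_abs]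
    have h1 : |powerBarrier n β A (x + z) - powerBarrier n β A x
        - ⟪gradient (powerBarrier n β A) x, z⟫| * |K z|
        ≤ (A * (M₀ * P * ‖z‖^2)) * (Lam * ‖z‖ ^ (-(n:ℝ) - 2*s)) := by
      apply mul_le_mul hnum_bnd hKabs (abs_nonneg _)
      positivity
    refine h1.trans (le_of_eq ?_)
    have hzp : ‖z‖^2 * ‖z‖ ^ (-(n:ℝ) - 2*s) = ‖z‖ ^ p := by
      rw [← Real.rpow_natCast ‖z‖ 2, ← Real.rpow_add hzn, hpdef]
      push_cast
      ring_nf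
    calc (A * (M₀ * P * ‖z‖^2)) * (Lam * ‖z‖ ^ (-(n:ℝ) - 2*s))
        = A * M₀ * Lam * P * (‖z‖^2 * ‖z‖ ^ (-(n:ℝ) - 2*s)) := by ring
      _ = A * M₀ * Lam * P * ‖z‖ ^ p := by rw [hzp]
  -- the dominating function is integrable
  have hg : IntegrableOn (fun z : EuclideanSpace ℝ (Fin n) => A * M₀ * Lam * P * ‖z‖ ^ p)
      (Metric.closedBall (0 : EuclideanSpace ℝ (Fin n)) 1) := hInt.const_mul _
  -- a.e. bound
  have hae : ∀ᵐ z ∂(volume.restrict (Metric.closedBall (0 : EuclideanSpace ℝ (Fin n)) 1)),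
      ‖(powerBarrier n β A (x + z) - powerBarrier n β A x
        - ⟪gradient (powerBarrier n β A) x, z⟫) * K z‖
      ≤ A * M₀ * Lam * P * ‖z‖ ^ p := by
    haveI : Nonempty (Fin n) := Fin.pos_iff_nonempty.mp hn
    haveI : Nontrivial (EuclideanSpace ℝ (Fin n)) := by
      exact inferInstance
    have h0 : ∀ᵐ z : EuclideanSpace ℝ (Fin n) ∂volume, z ≠ 0 := by
      rw [ae_iff]
      simpa using measure_singleton (0 : EuclideanSpace ℝ (Fin n))
    filter_upwards [ae_restrict_of_ae h0, ae_restrict_mem measurableSet_closedBall]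
      with z hz0 hzmem
    exact hptwise z hz0 (by simpa [Metric.mem_closedBall] using hzmem)
  -- measurability of the integrand
  have hcont : Continuous (fun z : EuclideanSpace ℝ (Fin n) =>
      powerBarrier n β A (x + z) - powerBarrier n β A x
        - ⟪gradient (powerBarrier n β A) x, z⟫) := by
    apply Continuous.sub
    · apply Continuous.sub
      · apply Continuous.mul continuous_const
        apply Continuous.rpow_const
        · exact (continuous_const.add ((continuous_const.add continuous_id).norm.pow 2))
        · intro y; left; positivity
      · exact continuous_const
    · exact (innerSL ℝ (gradient (powerBarrier n β A) x)).continuous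
  have hmeas : AEStronglyMeasurable (fun z : EuclideanSpace ℝ (Fin n) =>
      (powerBarrier n β A (x + z) - powerBarrier n β A x
        - ⟪gradient (powerBarrier n β A) x, z⟫) * K z)
      (volume.restrict (Metric.closedBall (0 : EuclideanSpace ℝ (Fin n)) 1)) :=
    (hcont.aestronglyMeasurable.mul hKmeas.aestronglyMeasurable).restrict
  have hIntegrable : IntegrableOn (fun z : EuclideanSpace ℝ (Fin n) =>
      (powerBarrier n β A (x + z) - powerBarrier n β A x
        - ⟪gradient (powerBarrier n β A) x, z⟫) * K z)
      (Metric.closedBall (0 : EuclideanSpace ℝ (Fin n)) 1) :=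
    Integrable.mono' hg hmeas hae
  refine ⟨hIntegrable, ?_⟩
  -- integral bound
  have hbound := norm_integral_le_of_norm_le hg hae
  rw [Real.norm_eq_abs] at hbound
  refine hbound.trans ?_
  have hgint : (∫ z in Metric.closedBall (0 : EuclideanSpace ℝ (Fin n)) 1,
      A * M₀ * Lam * P * ‖z‖ ^ p) = A * M₀ * Lam * P * I := by
    rw [hI, integral_const_mul]
  rw [hgint]
  have hPE : (1 + ‖x‖ ^ 2) ^ (-β - 1) = P := by
    rw [hP, show -(β+1) = -β-1 by ring]
  rw [hPE]
  nlinarith [hPpos, hA, hI0, hM₀pos, hLam, mul_pos hA hPpos]
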